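/- Assume f satisfies (f), D satisfies (D), 0 ≤ ℓ⁻ < ℓ⁺ ≤ 1, c = (f(ℓ⁺)−f(ℓ⁻))/(ℓ⁺−ℓ⁻), g(ρ) = f(ρ) − cρ, and let φ be a profile with I = {ξ : ℓ⁻ < φ(ξ) < ℓ⁺}. If it is not the case that (D(0) = 0 and ℓ⁻ = 0), and it is not the case that (D(1) = 0 and ℓ⁺ = 1), then I = ℝ and lim_{ξ→−∞} φ′(ξ) = 0 = lim_{ξ→+∞} φ′(ξ). -/

import Mathlib

open Set Filter MeasureTheory
open scoped Topology Classical

/-- Assumption (f): `f ∈ C¹([0,1];ℝ)` is nonnegative, strictly concave, `f 0 = f 1 = 0`. -/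
def FluxAssumption (f : ℝ → ℝ) : Prop :=
  ContDiffOn ℝ 1 f (Icc 0 1) ∧ StrictConcaveOn ℝ (Icc 0 1) f ∧
  (∀ x ∈ Icc (0:ℝ) 1, 0 ≤ f x) ∧ f 0 = 0 ∧ f 1 = 0

/-- Assumption (D): `D ∈ C¹([0,1];ℝ)` is nonnegative and positive on `(0,1)`. -/
def DiffAssumption (D : ℝ → ℝ) : Prop :=
  ContDiffOn ℝ 1 D (Icc 0 1) ∧ (∀ x ∈ Icc (0:ℝ) 1, 0 ≤ D x) ∧
  (∀ x ∈ Ioo (0:ℝ) 1, 0 < D x)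

/-- The wave speed `c = (f(ℓ⁺) - f(ℓ⁻))/(ℓ⁺ - ℓ⁻)`. -/
noncomputable def waveSpeed (f : ℝ → ℝ) (a b : ℝ) : ℝ := (f b - f a) / (b - a)

/-- The reduced flux `g(ρ) = f(ρ) - c ρ`. -/
noncomputable def redFlux (f : ℝ → ℝ) (a b ρ : ℝ) : ℝ := f ρ - waveSpeed f a b * ρ

/-- A profile for data `f, D, ℓ⁻ = a, ℓ⁺ = b`: continuous, non-decreasing, with values in
`[a,b]`, limits `a` at `-∞` and `b` at `+∞`, `C²` on `I = {ξ | a < φ ξ < b}` with positive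
derivative there, satisfying `D(φ) φ' = g(φ) - g(a)` on `I`. -/
def IsProfile (f D : ℝ → ℝ) (a b : ℝ) (φ : ℝ → ℝ) : Prop :=
  Continuous φ ∧ Monotone φ ∧ (∀ ξ, φ ξ ∈ Icc a b) ∧
  Tendsto φ atBot (𝓝 a) ∧ Tendsto φ atTop (𝓝 b) ∧
  ContDiffOn ℝ 2 φ {ξ | a < φ ξ ∧ φ ξ < b} ∧
  ∀ ξ, a < φ ξ → φ ξ < b →
    0 < deriv φ ξ ∧ D (φ ξ) * deriv φ ξ = redFlux f a b (φ ξ) - redFlux f a b a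

/-! On `[ℓ⁻, ℓ⁺]` the diffusion is bounded below by some `δ > 0` and the reduced flux `g` is
`K`-Lipschitz, so the profile equation gives `φ' ≤ (K/δ) (φ - ℓ⁻)` and, since `g(ℓ⁺) = g(ℓ⁻)`,
also `φ' ≤ (K/δ) (ℓ⁺ - φ)` on `I`. By Grönwall's inequality `φ` can then reach neither `ℓ⁻` nor
`ℓ⁺` at a finite point, so `I = ℝ`. On `ℝ` the equation reads `φ' = H ∘ φ` with
`H(ρ) = (g(ρ) - g(ℓ⁻)) / D(ρ)` continuous on `[ℓ⁻, ℓ⁺]` and vanishing at both ends. -/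

open Real

theorem le_mul_exp_of_hasDerivAt_le_mul {u u' : ℝ → ℝ} {L a b : ℝ} (hab : a ≤ b)
    (hu : ContinuousOn u (Icc a b)) (hderiv : ∀ x ∈ Ioo a b, HasDerivAt u (u' x) x)
    (hbound : ∀ x ∈ Ioo a b, u' x ≤ L * u x) :
    u b ≤ u a * exp (L * (b - a)) := by
  have hanti : AntitoneOn (fun x => u x * exp (-L * x)) (Icc a b) := by
    refine antitoneOn_of_hasDerivWithinAt_nonpos (convex_Icc a b) (hu.mul (by fun_prop))
      (f' := fun x => (u' x - L * u x) * exp (-L * x)) (fun x hx => ?_) (fun x hx => ?_)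
    · rw [interior_Icc] at hx
      have hexp := ((hasDerivAt_id x).const_mul (-L)).exp
      exact (((hderiv x hx).mul hexp).congr_deriv (by simp only [id]; ring)).hasDerivWithinAt
    · rw [interior_Icc] at hx
      exact mul_nonpos_of_nonpos_of_nonneg (sub_nonpos.2 (hbound x hx)) (exp_pos _).le
  calc u b = u b * exp (-L * b) * exp (L * b) := by rw [mul_assoc, ← exp_add]; simp
    _ ≤ u a * exp (-L * a) * exp (L * b) :=
      mul_le_mul_of_nonneg_right (hanti (left_mem_Icc.2 hab) (right_mem_Icc.2 hab) hab)
        (exp_pos _).le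
    _ = u a * exp (L * (b - a)) := by rw [mul_assoc, ← exp_add]; ring_nf

theorem left_lt_of_deriv_le_mul_sub {φ : ℝ → ℝ} {a b L : ℝ} (hab : a < b) (hφ : Continuous φ)
    (hge : ∀ ξ, a ≤ φ ξ) (htop : Tendsto φ atTop (𝓝 b))
    (hdiff : ∀ ξ, a < φ ξ → φ ξ < b → DifferentiableAt ℝ φ ξ)
    (hbound : ∀ ξ, a < φ ξ → φ ξ < b → deriv φ ξ ≤ L * (φ ξ - a)) (ξ : ℝ) : a < φ ξ := by
  by_contra! hξ
  set S := {x | φ x = a}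
  have hS : ξ ∈ S := le_antisymm hξ (hge ξ)
  have hSbdd : BddAbove S := by
    obtain ⟨N, hN⟩ := eventually_atTop.1 (htop.eventually (eventually_gt_nhds hab))
    exact ⟨N, fun x hx => not_lt.1 fun hNx => (hN x hNx.le).ne' hx⟩
  -- `ξ₁` is the last point with `φ = a`; right after it `φ ∈ (a, b)`, where Grönwall applies.
  set ξ₁ := sSup S
  have hφξ₁ : φ ξ₁ = a := (isClosed_eq hφ continuous_const).csSup_mem ⟨ξ, hS⟩ hSbdd
  have hright : ∀ x, ξ₁ < x → a < φ x := fun x hx =>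
    (hge x).lt_of_ne fun h => hx.not_ge (le_csSup hSbdd h.symm)
  obtain ⟨u, hξ₁u, hu⟩ := exists_Ico_subset_of_mem_nhds
    (hφ.continuousAt.eventually_lt continuousAt_const (hφξ₁ ▸ hab)) (exists_gt ξ₁)
  obtain ⟨ξ₂, hξ₁₂, hξ₂u⟩ := exists_between hξ₁u
  have hI : ∀ x ∈ Ioo ξ₁ ξ₂, a < φ x ∧ φ x < b := fun x hx =>
    ⟨hright x hx.1, hu ⟨hx.1.le, hx.2.trans hξ₂u⟩⟩
  have hgron := le_mul_exp_of_hasDerivAt_le_mul (u := fun x => φ x - a) hξ₁₂.le (by fun_prop)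
    (fun x hx => (hdiff x (hI x hx).1 (hI x hx).2).hasDerivAt.sub_const a)
    (fun x hx => hbound x (hI x hx).1 (hI x hx).2)
  simp only [hφξ₁, sub_self, zero_mul] at hgron
  linarith [hright ξ₂ hξ₁₂]

theorem lt_right_of_deriv_le_mul_sub {φ : ℝ → ℝ} {a b L : ℝ} (hab : a < b) (hφ : Continuous φ)
    (hle : ∀ ξ, φ ξ ≤ b) (hbot : Tendsto φ atBot (𝓝 a))
    (hdiff : ∀ ξ, a < φ ξ → φ ξ < b → DifferentiableAt ℝ φ ξ)
    (hbound : ∀ ξ, a < φ ξ → φ ξ < b → deriv φ ξ ≤ L * (b - φ ξ)) (ξ : ℝ) : φ ξ < b := by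
  have hderiv (x : ℝ) : deriv (fun y => -φ (-y)) x = deriv φ (-x) := by
    rw [deriv.fun_neg, deriv_comp_neg, neg_neg]
  have := left_lt_of_deriv_le_mul_sub (φ := fun y => -φ (-y)) (a := -b) (b := -a) (L := L)
    (neg_lt_neg hab) (by fun_prop) (fun x => neg_le_neg (hle _))
    ((hbot.comp tendsto_neg_atTop_atBot).neg)
    (fun x h₁ h₂ => ((hdiff (-x) (by linarith) (by linarith)).comp x differentiableAt_id.neg).neg)
    (fun x h₁ h₂ => by
      rw [hderiv]
      linarith [hbound (-x) (by linarith) (by linarith)]) (-ξ)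
  simpa using this

theorem redFlux_right_eq_left {f : ℝ → ℝ} {a b : ℝ} (hab : a ≠ b) :
    redFlux f a b b = redFlux f a b a := by
  have : b - a ≠ 0 := sub_ne_zero.2 hab.symm
  simp only [redFlux, waveSpeed]
  field_simp
  ring

theorem DiffAssumption.pos_of_mem_Icc {D : ℝ → ℝ} (hD : DiffAssumption D) {a b : ℝ}
    (ha : 0 ≤ a) (hb : b ≤ 1) (hnd0 : ¬ (D 0 = 0 ∧ a = 0)) (hnd1 : ¬ (D 1 = 0 ∧ b = 1)) :
    ∀ u ∈ Icc a b, 0 < D u := by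
  intro u ⟨hau, hub⟩
  rcases (ha.trans hau).eq_or_lt with rfl | hu0
  · exact (hD.2.1 0 ⟨le_rfl, zero_le_one⟩).lt_of_ne'
      fun h => hnd0 ⟨h, le_antisymm hau ha⟩
  rcases (hub.trans hb).eq_or_lt with rfl | hu1
  · exact (hD.2.1 1 ⟨zero_le_one, le_rfl⟩).lt_of_ne'
      fun h => hnd1 ⟨h, le_antisymm hb hub⟩
  exact hD.2.2 u ⟨hu0, hu1⟩

namespace IsProfile

variable {f D φ : ℝ → ℝ} {a b : ℝ}

theorem differentiableAt (hφ : IsProfile f D a b φ) {ξ : ℝ} (ha : a < φ ξ) (hb : φ ξ < b) :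
    DifferentiableAt ℝ φ ξ :=
  (hφ.2.2.2.2.2.1.differentiableOn two_ne_zero).differentiableAt
    ((isOpen_Ioo.preimage hφ.1).mem_nhds ⟨ha, hb⟩)

theorem deriv_le_of_lipschitzOnWith (hφ : IsProfile f D a b φ) (hab : a ≠ b) {K : NNReal}
    (hg : LipschitzOnWith K (redFlux f a b) (Icc a b)) {δ : ℝ} (hδ : 0 < δ)
    (hDδ : ∀ u ∈ Icc a b, δ ≤ D u) {ξ : ℝ} (ha : a < φ ξ) (hb : φ ξ < b) :
    deriv φ ξ ≤ K / δ * (φ ξ - a) ∧ deriv φ ξ ≤ K / δ * (b - φ ξ) := by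
  obtain ⟨hpos, hode⟩ := hφ.2.2.2.2.2.2 ξ ha hb
  have hmem := hφ.2.2.1 ξ
  have hδφ' : δ * deriv φ ξ ≤ redFlux f a b (φ ξ) - redFlux f a b a :=
    hode ▸ mul_le_mul_of_nonneg_right (hDδ _ hmem) hpos.le
  have hlip (c : ℝ) (hc : c ∈ Icc a b) :
      redFlux f a b (φ ξ) - redFlux f a b c ≤ K * |φ ξ - c| := by
    simpa only [Real.dist_eq] using (le_abs_self _).trans (hg.dist_le_mul _ hmem _ hc)
  simp only [div_mul_eq_mul_div, le_div_iff₀ hδ]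
  constructor
  · have := hlip a (left_mem_Icc.2 (hmem.1.trans hmem.2))
    rw [abs_of_pos (sub_pos.2 ha)] at this
    linarith
  · have := hlip b (right_mem_Icc.2 (hmem.1.trans hmem.2))
    rw [abs_of_neg (sub_neg.2 hb), redFlux_right_eq_left hab] at this
    linarith

theorem mem_Ioo (hφ : IsProfile f D a b φ) (hab : a < b) (hf : ContDiffOn ℝ 1 f (Icc a b))
    (hDc : ContinuousOn D (Icc a b)) (hD : ∀ u ∈ Icc a b, 0 < D u) (ξ : ℝ) :
    φ ξ ∈ Ioo a b := by
  obtain ⟨δ, hδ, hDδ⟩ := isCompact_Icc.exists_forall_le' hDc hD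
  have hg : ContDiffOn ℝ 1 (fun ρ => f ρ - waveSpeed f a b * ρ) (Icc a b) := hf.sub (by fun_prop)
  obtain ⟨K, hK⟩ := hg.exists_lipschitzOnWith one_ne_zero (convex_Icc a b) isCompact_Icc
  have hbound := fun ξ ha hb => hφ.deriv_le_of_lipschitzOnWith hab.ne hK hδ hDδ (ξ := ξ) ha hb
  exact ⟨left_lt_of_deriv_le_mul_sub hab hφ.1 (fun ξ => (hφ.2.2.1 ξ).1) hφ.2.2.2.2.1
      (fun _ => hφ.differentiableAt) (fun ξ ha hb => (hbound ξ ha hb).1) ξ,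
    lt_right_of_deriv_le_mul_sub hab hφ.1 (fun ξ => (hφ.2.2.1 ξ).2) hφ.2.2.2.1
      (fun _ => hφ.differentiableAt) (fun ξ ha hb => (hbound ξ ha hb).2) ξ⟩

theorem tendsto_deriv (hφ : IsProfile f D a b φ) (hab : a < b) (hf : ContinuousOn f (Icc a b))
    (hDc : ContinuousOn D (Icc a b)) (hD : ∀ u ∈ Icc a b, 0 < D u)
    (hI : ∀ ξ, φ ξ ∈ Ioo a b) :
    Tendsto (deriv φ) atBot (𝓝 0) ∧ Tendsto (deriv φ) atTop (𝓝 0) := by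
  set H : ℝ → ℝ := fun ρ => (redFlux f a b ρ - redFlux f a b a) / D ρ
  have hH : ContinuousOn H (Icc a b) :=
    ((hf.sub (by fun_prop)).sub continuousOn_const).div hDc fun ρ hρ => (hD ρ hρ).ne'
  have hderiv : deriv φ = H ∘ φ := funext fun ξ => by
    rw [Function.comp_apply, eq_div_iff (hD _ (hφ.2.2.1 ξ)).ne', mul_comm]
    exact (hφ.2.2.2.2.2.2 ξ (hI ξ).1 (hI ξ).2).2
  have hlim {l : Filter ℝ} {c : ℝ} (hc : c ∈ Icc a b) (hφc : Tendsto φ l (𝓝 c)) (hHc : H c = 0) :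
      Tendsto (deriv φ) l (𝓝 0) :=
    hderiv ▸ hHc ▸ (hH c hc).tendsto.comp
      (tendsto_nhdsWithin_iff.2 ⟨hφc, .of_forall hφ.2.2.1⟩)
  exact ⟨hlim (left_mem_Icc.2 hab.le) hφ.2.2.2.1 (by simp [H]),
    hlim (right_mem_Icc.2 hab.le) hφ.2.2.2.2.1 (by simp [H, redFlux_right_eq_left hab.ne])⟩

end IsProfile

/-- In the non-degenerate case, `I = ℝ` and `φ'` vanishes at `±∞`. -/
theorem stmt3 (f D : ℝ → ℝ) (hf : FluxAssumption f) (hD : DiffAssumption D)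
    (lm lp : ℝ) (h0 : 0 ≤ lm) (hl : lm < lp) (h1 : lp ≤ 1)
    (φ : ℝ → ℝ) (hφ : IsProfile f D lm lp φ)
    (hnd0 : ¬ (D 0 = 0 ∧ lm = 0)) (hnd1 : ¬ (D 1 = 0 ∧ lp = 1)) :
    {ξ | lm < φ ξ ∧ φ ξ < lp} = univ ∧
    Tendsto (deriv φ) atBot (𝓝 0) ∧ Tendsto (deriv φ) atTop (𝓝 0) := by
  have hsub : Icc lm lp ⊆ Icc 0 1 := Icc_subset_Icc h0 h1
  have hfC : ContDiffOn ℝ 1 f (Icc lm lp) := hf.1.mono hsub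
  have hDc : ContinuousOn D (Icc lm lp) := hD.1.continuousOn.mono hsub
  have hDpos := hD.pos_of_mem_Icc h0 h1 hnd0 hnd1
  have hI := hφ.mem_Ioo hl hfC hDc hDpos
  exact ⟨eq_univ_of_forall hI, hφ.tendsto_deriv hl hfC.continuousOn hDc hDpos hI⟩
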